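/- arXiv:quant-ph/0510185 — 6 statements merged into one kernel-verified Lean document; each statement's English description precedes it below -/
import Mathlib

section
/- Let ρ be an irreducible complex representation of a finite group G. Then the eigenvalues of the operator A := (1/|G|) ∑_{g ∈ G} ρ(g) ⊗ ρ(g⁻¹) are contained in {1/d_ρ, -1/d_ρ}, where d_ρ is the dimension of ρ. -/
/-!
By Schur's lemma every average `∑ g, ρ g * X * ρ g⁻¹` is a scalar matrix; taking `X` to be a
matrix unit gives the orthogonality relations
`∑ g, ρ g i a * ρ g⁻¹ b j = |G| / d · δ_ab δ_ij`. Read entrywise, they say that the average of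
`ρ g ⊗ₖ ρ g⁻¹` is `1 / d` times the permutation matrix of the swap `(i, j) ↦ (j, i)`. That
matrix is an involution, so the average squares to `1 / d²` and its eigenvalues are `± 1 / d`.
-/

open Kronecker

theorem spectrum_subset_of_mul_self_eq_algebraMap {𝕜 A : Type*} [Field 𝕜] [Ring A]
    [Algebra 𝕜 A] {a : A} {c : 𝕜} (h : a * a = algebraMap 𝕜 A (c ^ 2)) :
    spectrum 𝕜 a ⊆ {c, -c} := by
  intro z hz
  have hsq : z ^ 2 ∈ spectrum 𝕜 (algebraMap 𝕜 A (c ^ 2)) := by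
    simpa only [← h, ← sq] using spectrum.pow_mem_pow a 2 hz
  have hzc : z ^ 2 = c ^ 2 := by
    by_contra hne
    apply spectrum.mem_iff.mp hsq
    rw [← map_sub]
    exact (Ne.isUnit (sub_ne_zero.mpr hne)).map _
  simpa using sq_eq_sq_iff_eq_or_eq_neg.mp hzc

namespace Matrix

variable {n : Type*} [Fintype n] [DecidableEq n]

def IsIrreducibleFamily {ι K : Type*} [Field K] (ρ : ι → Matrix n n K) : Prop :=
  ∀ W : Submodule K (n → K), (∀ i, ∀ v ∈ W, (ρ i).mulVec v ∈ W) → W = ⊥ ∨ W = ⊤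

theorem mul_single_one_mul_apply {R : Type*} [Semiring R] (A B : Matrix n n R) (a b i j : n) :
    (A * single a b (1 : R) * B) i j = A i a * B b j := by
  simp [mul_apply, single_apply, ite_and]

theorem permMatrix_prodComm_mul_self {R : Type*} [NonAssocSemiring R] :
    Equiv.Perm.permMatrix R (Equiv.prodComm n n) * Equiv.Perm.permMatrix R (Equiv.prodComm n n)
      = 1 := by
  rw [← permMatrix_mul]
  convert permMatrix_one
  ext <;> rfl

section Conjugation

variable {G R : Type*} [Group G] [Fintype G]

theorem commute_sum_conj [Semiring R] (ρ : G →* Matrix n n R) (X : Matrix n n R) (h : G) :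
    Commute (ρ h) (∑ g, ρ g * X * ρ g⁻¹) := by
  have hinv : ρ h⁻¹ * ρ h = 1 := by rw [← map_mul, inv_mul_cancel, map_one]
  have hconj : ρ h * (∑ g, ρ g * X * ρ g⁻¹) * ρ h⁻¹ = ∑ g, ρ g * X * ρ g⁻¹ := by
    rw [Finset.mul_sum, Finset.sum_mul]
    exact Fintype.sum_equiv (Equiv.mulLeft h) _ _ fun g => by
      simp only [Equiv.coe_mulLeft, _root_.mul_inv_rev, map_mul, Matrix.mul_assoc]
  calc ρ h * (∑ g, ρ g * X * ρ g⁻¹)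
      = ρ h * (∑ g, ρ g * X * ρ g⁻¹) * ρ h⁻¹ * ρ h := by
        rw [Matrix.mul_assoc _ (ρ h⁻¹), hinv, Matrix.mul_one]
    _ = (∑ g, ρ g * X * ρ g⁻¹) * ρ h := by rw [hconj]

theorem trace_sum_conj [CommSemiring R] (ρ : G →* Matrix n n R) (X : Matrix n n R) :
    (∑ g, ρ g * X * ρ g⁻¹).trace = Fintype.card G * X.trace := by
  simp [trace_sum, trace_mul_cycle, ← map_mul]

end Conjugation

section Schur

variable {K : Type*} [Field K] [IsAlgClosed K]

theorem IsIrreducibleFamily.eq_smul_one_of_forall_commute {ι : Type*} {ρ : ι → Matrix n n K}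
    (hρ : IsIrreducibleFamily ρ) {M : Matrix n n K} (hM : ∀ i, Commute (ρ i) M) :
    ∃ c : K, M = c • 1 := by
  cases isEmpty_or_nonempty n
  · exact ⟨0, Subsingleton.elim _ _⟩
  obtain ⟨μ, hμ⟩ := Module.End.exists_eigenvalue (toLin' M)
  have hinv : ∀ i, ∀ v ∈ Module.End.eigenspace (toLin' M) μ,
      (ρ i).mulVec v ∈ Module.End.eigenspace (toLin' M) μ := by
    intro i v hv
    rw [Module.End.mem_eigenspace_iff, toLin'_apply] at hv ⊢
    rw [mulVec_mulVec, ← (hM i).eq, ← mulVec_mulVec, hv, mulVec_smul]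
  have htop := (hρ _ hinv).resolve_left hμ
  refine ⟨μ, toLin'.injective (LinearMap.ext fun v => ?_)⟩
  have hv : v ∈ Module.End.eigenspace (toLin' M) μ := htop ▸ Submodule.mem_top
  simpa using Module.End.mem_eigenspace_iff.mp hv

variable [CharZero K] {G : Type*} [Group G] [Fintype G] {ρ : G →* Matrix n n K}

theorem IsIrreducibleFamily.sum_conj_eq_smul_one (hρ : IsIrreducibleFamily ρ)
    (X : Matrix n n K) :
    ∑ g, ρ g * X * ρ g⁻¹ = (Fintype.card G * X.trace / Fintype.card n) • 1 := by
  cases isEmpty_or_nonempty n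
  · exact Subsingleton.elim _ _
  obtain ⟨c, hc⟩ := hρ.eq_smul_one_of_forall_commute (commute_sum_conj ρ X)
  have htr := trace_sum_conj ρ X
  rw [hc, trace_smul, trace_one, smul_eq_mul] at htr
  rw [hc, ← htr, mul_div_cancel_right₀ _ (Nat.cast_ne_zero.mpr Fintype.card_ne_zero)]

theorem IsIrreducibleFamily.sum_apply_mul_inv_apply (hρ : IsIrreducibleFamily ρ)
    (i a b j : n) :
    ∑ g, ρ g i a * ρ g⁻¹ b j =
      if a = b ∧ i = j then (Fintype.card G / Fintype.card n : K) else 0 := by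
  have h := congrFun₂ (hρ.sum_conj_eq_smul_one (single a b 1)) i j
  simp only [sum_apply, mul_single_one_mul_apply] at h
  rw [h]
  by_cases hab : a = b
  · subst hab
    simp [one_apply]
  · simp [hab]

theorem IsIrreducibleFamily.sum_kronecker_inv_eq_smul_permMatrix (hρ : IsIrreducibleFamily ρ) :
    ∑ g, ρ g ⊗ₖ ρ g⁻¹ =
      (Fintype.card G / Fintype.card n : K) • Equiv.Perm.permMatrix K (Equiv.prodComm n n) := by
  ext ⟨i, b⟩ ⟨a, j⟩
  simp [sum_apply, hρ.sum_apply_mul_inv_apply, PEquiv.toMatrix_apply, eq_comm (a := b)]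

end Schur

end Matrix

open Kronecker in
theorem spectrum_average_kronecker_rep_antirep_general
    {G : Type*} [Group G] [Fintype G] {d : ℕ}
    (ρ : G →* Matrix (Fin d) (Fin d) ℂ)
    (hρirr : ∀ W : Submodule ℂ (Fin d → ℂ),
      (∀ g : G, ∀ v ∈ W, (ρ g).mulVec v ∈ W) → W = ⊥ ∨ W = ⊤) :
    spectrum ℂ ((Fintype.card G : ℂ)⁻¹ • ∑ g : G, (ρ g) ⊗ₖ (ρ g⁻¹))
      ⊆ {(d : ℂ)⁻¹, -(d : ℂ)⁻¹} := by
  have hG : (Fintype.card G : ℂ) ≠ 0 := Nat.cast_ne_zero.mpr Fintype.card_ne_zero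
  have hA : (Fintype.card G : ℂ)⁻¹ • ∑ g : G, (ρ g) ⊗ₖ (ρ g⁻¹)
      = (d : ℂ)⁻¹ • Equiv.Perm.permMatrix ℂ (Equiv.prodComm (Fin d) (Fin d)) := by
    rw [Matrix.IsIrreducibleFamily.sum_kronecker_inv_eq_smul_permMatrix hρirr, smul_smul,
      Fintype.card_fin, div_eq_mul_inv, inv_mul_cancel_left₀ hG]
  apply spectrum_subset_of_mul_self_eq_algebraMap
  rw [hA, smul_mul_smul_comm, Matrix.permMatrix_prodComm_mul_self,
    Algebra.algebraMap_eq_smul_one, sq]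

open Kronecker in
/-- The eigenvalues of the average of `ρ(g) ⊗ ρ(g⁻¹)` over a finite group `G`,
for an irreducible unitary representation `ρ` of dimension `d`, lie in `{1/d, -1/d}`. -/
theorem spectrum_average_kronecker_rep_antirep
    {G : Type*} [Group G] [Fintype G] {d : ℕ}
    (ρ : G →* Matrix (Fin d) (Fin d) ℂ)
    (hρu : ∀ g, ρ g ∈ Matrix.unitaryGroup (Fin d) ℂ)
    (hρirr : ∀ W : Submodule ℂ (Fin d → ℂ),
      (∀ g : G, ∀ v ∈ W, (ρ g).mulVec v ∈ W) → W = ⊥ ∨ W = ⊤) :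
    spectrum ℂ ((Fintype.card G : ℂ)⁻¹ • ∑ g : G, (ρ g) ⊗ₖ (ρ g⁻¹))
      ⊆ {(d : ℂ)⁻¹, -(d : ℂ)⁻¹} :=
  spectrum_average_kronecker_rep_antirep_general ρ hρirr
end

section
/- Let G be a finite abelian group, k a positive integer. With η^x_w := |{b ∈ {0,1}^k : b · x = w}|, the second moment satisfies (1/|G|^{k+1}) ∑_{x ∈ G^k, w ∈ G} (η^x_w)² = 2^k/|G| + 2^k(2^k − 1)/|G|². -/
/-!
Squaring `η^x_w` and summing over `w` counts the pairs `(b, c)` with `b · x = c · x`; swapping the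
sums, each pair contributes the number of `x` with `b · x = c · x`. For `b = c` that is every
`x ∈ G^k`; for `b ≠ c` the map `x ↦ b · x - c · x` is a surjective homomorphism `G^k → G`, so
its kernel has exactly `|G|^(k-1)` elements.
-/

open Finset

theorem sum_card_fiber_sq {α β : Type*} [Fintype α] [Fintype β] [DecidableEq β] (f : α → β) :
    ∑ w, #{a | f a = w} ^ 2 = ∑ a, ∑ a', if f a = f a' then 1 else 0 := by
  simp only [sq, card_filter, sum_mul_sum, boole_mul]
  rw [sum_comm]
  exact sum_congr rfl fun a _ => by rw [sum_comm]; simp [eq_comm]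

theorem AddMonoidHom.card_fiber_mul_card_of_surjective {A B : Type*} [AddGroup A] [Fintype A]
    [AddGroup B] [Fintype B] [DecidableEq B] (f : A →+ B) (hf : Function.Surjective f) (y : B) :
    #{x | f x = y} * Fintype.card B = Fintype.card A := by
  calc #{x | f x = y} * Fintype.card B = ∑ z : B, #{x | f x = z} := by
        rw [sum_congr rfl fun z _ => card_fiber_eq_of_mem_range f (hf z) (hf y), sum_const,
          card_univ, smul_eq_mul, mul_comm]
    _ = Fintype.card A := (card_eq_sum_card_fiberwise fun x _ => mem_univ (f x)).symm

section SubsetSum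

variable {ι G : Type*} [DecidableEq ι] [AddCommGroup G]

theorem surjective_subsetSum_sub {b c : Finset ι} (hbc : b ≠ c) :
    Function.Surjective fun x : ι → G => ∑ i ∈ b, x i - ∑ i ∈ c, x i := by
  obtain ⟨j, hj⟩ := symmDiff_nonempty.2 hbc
  intro g
  rcases mem_symmDiff.1 hj with ⟨hjb, hjc⟩ | ⟨hjc, hjb⟩
  · exact ⟨Pi.single j g, by simp [Pi.single_apply, hjb, hjc]⟩
  · exact ⟨Pi.single j (-g), by simp [Pi.single_apply, hjb, hjc]⟩

variable [Fintype ι] [Fintype G] [DecidableEq G]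

theorem card_subsetSum_eq_mul_card {b c : Finset ι} (hbc : b ≠ c) :
    #{x : ι → G | ∑ i ∈ b, x i = ∑ i ∈ c, x i} * Fintype.card G
      = Fintype.card G ^ Fintype.card ι := by
  let f : (ι → G) →+ G :=
    ∑ i ∈ b, Pi.evalAddMonoidHom (fun _ => G) i - ∑ i ∈ c, Pi.evalAddMonoidHom (fun _ => G) i
  have hf : ⇑f = fun x => ∑ i ∈ b, x i - ∑ i ∈ c, x i :=
    funext fun x => by simp [f, AddMonoidHom.finsetSum_apply]
  have := f.card_fiber_mul_card_of_surjective (hf ▸ surjective_subsetSum_sub hbc) 0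
  simpa [hf, sub_eq_zero, Fintype.card_pi] using this

end SubsetSum

theorem sum_sum_ite_eq_const {α R : Type*} [Fintype α] [DecidableEq α] [CommRing R] (A B : R) :
    ∑ a : α, ∑ a' : α, (if a = a' then A else B)
      = Fintype.card α * (A + (Fintype.card α - 1) * B) := by
  have (a a' : α) : (if a = a' then A else B) = B + if a = a' then A - B else 0 := by
    split_ifs <;> ring
  simp only [this, sum_add_distrib, sum_const, sum_ite_eq, mem_univ, if_true, card_univ,
    nsmul_eq_mul]
  ring

theorem subset_sum_count_second_moment_general
    {G : Type*} [AddCommGroup G] [Fintype G] [DecidableEq G] (k : ℕ) :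
    ((Fintype.card G : ℚ) ^ (k + 1))⁻¹ *
        ∑ x : Fin k → G, ∑ w : G,
          (((Finset.univ.filter (fun b : Finset (Fin k) => ∑ i ∈ b, x i = w)).card : ℚ)) ^ 2
      = 2 ^ k / (Fintype.card G : ℚ)
        + 2 ^ k * (2 ^ k - 1) / (Fintype.card G : ℚ) ^ 2 := by
  have hG : (Fintype.card G : ℚ) ≠ 0 := Nat.cast_ne_zero.2 Fintype.card_ne_zero
  have second_moment :
      ∑ x : Fin k → G, ∑ w : G, #{b : Finset (Fin k) | ∑ i ∈ b, x i = w} ^ 2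
        = ∑ b : Finset (Fin k), ∑ c : Finset (Fin k),
            #{x : Fin k → G | ∑ i ∈ b, x i = ∑ i ∈ c, x i} := by
    rw [sum_congr rfl fun x _ => sum_card_fiber_sq fun b : Finset (Fin k) => ∑ i ∈ b, x i]
    simp only [card_filter]
    rw [sum_comm]
    exact sum_congr rfl fun b _ => sum_comm
  have pair_count (b c : Finset (Fin k)) :
      (#{x : Fin k → G | ∑ i ∈ b, x i = ∑ i ∈ c, x i} : ℚ)
        = if b = c then (Fintype.card G : ℚ) ^ k
          else (Fintype.card G : ℚ) ^ k / Fintype.card G := by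
    split_ifs with hbc
    · simp [hbc, Fintype.card_pi]
    · rw [eq_div_iff hG]
      have := card_subsetSum_eq_mul_card (G := G) hbc
      rw [Fintype.card_fin] at this
      exact_mod_cast this
  rw [← Nat.cast_inj (R := ℚ)] at second_moment
  push_cast at second_moment
  rw [second_moment]
  simp only [pair_count, sum_sum_ite_eq_const, Fintype.card_finset, Fintype.card_fin]
  push_cast
  field_simp
  ring

/-- Second moment of the subset-sum solution count `η^x_w` over a finite abelian group:
`(1/|G|^{k+1}) ∑_{x,w} (η^x_w)² = 2^k/|G| + 2^k(2^k − 1)/|G|²`. -/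
theorem subset_sum_count_second_moment
    {G : Type*} [AddCommGroup G] [Fintype G] [DecidableEq G] (k : ℕ) (hk : 0 < k) :
    ((Fintype.card G : ℚ) ^ (k + 1))⁻¹ *
        ∑ x : Fin k → G, ∑ w : G,
          (((Finset.univ.filter (fun b : Finset (Fin k) => ∑ i ∈ b, x i = w)).card : ℚ)) ^ 2
      = 2 ^ k / (Fintype.card G : ℚ)
        + 2 ^ k * (2 ^ k - 1) / (Fintype.card G : ℚ) ^ 2 :=
  subset_sum_count_second_moment_general k
end

section
/- Let G be a finite abelian group and k a positive integer, and for x ∈ G^k and w ∈ G let η^x_w := |{b ∈ {0,1}^k : b · x = w}|. Then |{(x,w) ∈ G^k × G : η^x_w > 0}| ≥ 2^k |G|^k / (2^k/|G| + 1). -/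
open Finset

private lemma aux_card_le {G : Type*} [AddCommGroup G] [Fintype G] [DecidableEq G]
    {n : ℕ} {b b' : Finset (Fin (n + 1))} {i : Fin (n + 1)}
    (hib : i ∈ b) (hib' : i ∉ b') :
    (univ.filter (fun x : Fin (n + 1) → G => ∑ j ∈ b, x j = ∑ j ∈ b', x j)).card
      ≤ Fintype.card G ^ n := by
  have hcard : Fintype.card G ^ n = (univ : Finset (Fin n → G)).card := by
    simp [Fintype.card_fun]
  rw [hcard]
  apply Finset.card_le_card_of_injOn (fun x => x ∘ i.succAbove) (fun _ _ => mem_univ _)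
  intro x hx y hy hxy
  simp only [mem_coe, mem_filter, mem_univ, true_and] at hx hy
  have hoff : ∀ j, j ≠ i → x j = y j := by
    intro j hj
    obtain ⟨m, rfl⟩ := Fin.exists_succAbove_eq hj
    exact congrFun hxy m
  have hb' : ∑ j ∈ b', x j = ∑ j ∈ b', y j :=
    Finset.sum_congr rfl fun j hj => hoff j (fun h => hib' (h ▸ hj))
  have herase : ∑ j ∈ b.erase i, x j = ∑ j ∈ b.erase i, y j :=
    Finset.sum_congr rfl fun j hj => hoff j (Finset.ne_of_mem_erase hj)
  have hx' : x i + ∑ j ∈ b.erase i, x j = ∑ j ∈ b', x j := by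
    rw [Finset.add_sum_erase _ _ hib]; exact hx
  have hy' : y i + ∑ j ∈ b.erase i, y j = ∑ j ∈ b', y j := by
    rw [Finset.add_sum_erase _ _ hib]; exact hy
  have hxi : x i = y i := by
    have h := hx'.trans (hb'.trans hy'.symm)
    rw [herase] at h
    exact add_right_cancel h
  funext j
  by_cases hj : j = i
  · subst hj; exact hxi
  · exact hoff j hj

private lemma offdiag_card {G : Type*} [AddCommGroup G] [Fintype G] [DecidableEq G]
    {n : ℕ} {b b' : Finset (Fin (n + 1))} (hbb : b ≠ b') :
    (univ.filter (fun x : Fin (n + 1) → G => ∑ j ∈ b, x j = ∑ j ∈ b', x j)).card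
      ≤ Fintype.card G ^ n := by
  have hex : ∃ i, (i ∈ b ∧ i ∉ b') ∨ (i ∈ b' ∧ i ∉ b) := by
    by_contra h
    push_neg at h
    exact hbb (Finset.ext fun i => by have := h i; tauto)
  obtain ⟨i, hi | hi⟩ := hex
  · exact aux_card_le hi.1 hi.2
  · have heq : (univ.filter fun x : Fin (n + 1) → G => ∑ j ∈ b, x j = ∑ j ∈ b', x j)
        = univ.filter fun x => ∑ j ∈ b', x j = ∑ j ∈ b, x j :=
      Finset.filter_congr fun x _ => eq_comm
    rw [heq]
    exact aux_card_le hi.1 hi.2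

/-- Second-moment lower bound on the number of pairs `(x,w)` with a nonzero subset-sum
count: `|{(x,w) : η^x_w > 0}| ≥ 2^k |G|^k / (2^k/|G| + 1)`. -/
theorem card_nonzero_subset_sum_counts_lower_bound
    {G : Type*} [AddCommGroup G] [Fintype G] [DecidableEq G] (k : ℕ) (hk : 0 < k) :
    (2 : ℚ) ^ k * (Fintype.card G : ℚ) ^ k / (2 ^ k / (Fintype.card G : ℚ) + 1)
      ≤ ((Finset.univ.filter (fun p : (Fin k → G) × G =>
            0 < (Finset.univ.filter
              (fun b : Finset (Fin k) => ∑ i ∈ b, p.1 i = p.2)).card)).card : ℚ) := by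
  obtain ⟨n, rfl⟩ : ∃ n, k = n + 1 := ⟨k - 1, by omega⟩
  set η : ((Fin (n + 1) → G) × G) → ℕ := fun p =>
    (Finset.univ.filter (fun b : Finset (Fin (n + 1)) => ∑ i ∈ b, p.1 i = p.2)).card with hη
  -- first moment
  have hS1 : ∑ p : (Fin (n + 1) → G) × G, η p = Fintype.card G ^ (n + 1) * 2 ^ (n + 1) := by
    rw [Fintype.sum_prod_type]
    have hx : ∀ x : Fin (n + 1) → G, ∑ w : G, η (x, w) = 2 ^ (n + 1) := by
      intro x
      have := Finset.card_eq_sum_card_fiberwise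
        (f := fun b : Finset (Fin (n + 1)) => ∑ i ∈ b, x i) (s := univ) (t := univ)
        (fun b _ => mem_univ _)
      rw [← this]
      simp
    simp only [hx, Finset.sum_const, card_univ, Fintype.card_fun, Fintype.card_fin, smul_eq_mul]
  -- second moment
  have hS2 : ∑ p : (Fin (n + 1) → G) × G, (η p) ^ 2
      ≤ 2 ^ (n + 1) * Fintype.card G ^ (n + 1)
        + 2 ^ (n + 1) * 2 ^ (n + 1) * Fintype.card G ^ n := by
    have hrw : ∀ p : (Fin (n + 1) → G) × G, (η p) ^ 2
        = ∑ b : Finset (Fin (n + 1)), ∑ b' : Finset (Fin (n + 1)),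
            if (∑ i ∈ b, p.1 i = p.2 ∧ ∑ i ∈ b', p.1 i = p.2) then 1 else 0 := by
      intro p
      rw [sq, show η p = ∑ b : Finset (Fin (n + 1)), if ∑ i ∈ b, p.1 i = p.2 then 1 else 0
        from Finset.card_filter _ _, Finset.sum_mul_sum]
      refine Finset.sum_congr rfl fun b _ => Finset.sum_congr rfl fun b' _ => ?_
      by_cases h1 : ∑ i ∈ b, p.1 i = p.2 <;> by_cases h2 : ∑ i ∈ b', p.1 i = p.2 <;>
        simp [h1, h2]
    simp only [hrw]
    rw [Fintype.sum_prod_type]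
    have hswap : ∀ x : Fin (n + 1) → G,
        (∑ w : G, ∑ b : Finset (Fin (n + 1)), ∑ b' : Finset (Fin (n + 1)),
          if (∑ i ∈ b, x i = w ∧ ∑ i ∈ b', x i = w) then 1 else 0)
        = ∑ b : Finset (Fin (n + 1)), ∑ b' : Finset (Fin (n + 1)),
            if ∑ i ∈ b', x i = ∑ i ∈ b, x i then (1 : ℕ) else 0 := by
      intro x
      rw [Finset.sum_comm]
      refine Finset.sum_congr rfl fun b _ => ?_
      rw [Finset.sum_comm]
      refine Finset.sum_congr rfl fun b' _ => ?_
      simp only [ite_and]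
      rw [Finset.sum_ite_eq univ (∑ i ∈ b, x i) (fun w => if ∑ i ∈ b', x i = w then (1:ℕ) else 0)]
      simp
    simp only [hswap]
    rw [Finset.sum_comm]
    have hinner : ∀ b : Finset (Fin (n + 1)),
        (∑ x : Fin (n + 1) → G, ∑ b' : Finset (Fin (n + 1)),
          if ∑ i ∈ b', x i = ∑ i ∈ b, x i then (1 : ℕ) else 0)
        ≤ Fintype.card G ^ (n + 1) + 2 ^ (n + 1) * Fintype.card G ^ n := by
      intro b
      rw [Finset.sum_comm]
      have hterm : ∀ b' : Finset (Fin (n + 1)),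
          (∑ x : Fin (n + 1) → G, if ∑ i ∈ b', x i = ∑ i ∈ b, x i then (1 : ℕ) else 0)
          ≤ if b' = b then Fintype.card G ^ (n + 1) else Fintype.card G ^ n := by
        intro b'
        rw [← Finset.card_filter]
        by_cases hbb : b' = b
        · rw [if_pos hbb]
          calc _ ≤ (univ : Finset (Fin (n + 1) → G)).card := Finset.card_filter_le _ _
            _ = _ := by simp [Fintype.card_fun]
        · rw [if_neg hbb]
          exact offdiag_card hbb
      calc _ ≤ ∑ b' : Finset (Fin (n + 1)),
            if b' = b then Fintype.card G ^ (n + 1) else Fintype.card G ^ n :=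
          Finset.sum_le_sum fun b' _ => hterm b'
        _ ≤ _ := by
          rw [Finset.sum_ite, Finset.sum_const, Finset.sum_const, Finset.filter_eq' univ b]
          simp only [mem_univ, if_pos, smul_eq_mul]
          have h1 : ({b} : Finset (Finset (Fin (n + 1)))).card = 1 := rfl
          rw [h1, one_mul]
          gcongr
          · calc (univ.filter (fun b' : Finset (Fin (n + 1)) => ¬ b' = b)).card
                ≤ (univ : Finset (Finset (Fin (n + 1)))).card := Finset.card_filter_le _ _
              _ = 2 ^ (n + 1) := by simp
    calc _ ≤ ∑ _b : Finset (Fin (n + 1)),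
          (Fintype.card G ^ (n + 1) + 2 ^ (n + 1) * Fintype.card G ^ n) :=
        Finset.sum_le_sum fun b _ => hinner b
      _ = 2 ^ (n + 1) * (Fintype.card G ^ (n + 1) + 2 ^ (n + 1) * Fintype.card G ^ n) := by
        simp [mul_comm]
      _ = _ := by ring
  -- Cauchy–Schwarz
  set A := Finset.univ.filter (fun p : (Fin (n + 1) → G) × G => 0 < η p) with hA
  have hCS : (∑ p ∈ A, (η p : ℚ)) ^ 2 ≤ (A.card : ℚ) * ∑ p ∈ A, (η p : ℚ) ^ 2 :=
    sq_sum_le_card_mul_sum_sq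
  have hsum1 : ∑ p ∈ A, (η p : ℚ) = ∑ p : (Fin (n + 1) → G) × G, (η p : ℚ) :=
    Finset.sum_filter_of_ne fun p _ h => Nat.pos_of_ne_zero (by exact_mod_cast h)
  have hsum2 : ∑ p ∈ A, (η p : ℚ) ^ 2 ≤ ∑ p : (Fin (n + 1) → G) × G, (η p : ℚ) ^ 2 :=
    Finset.sum_le_sum_of_subset_of_nonneg (Finset.filter_subset _ _) (fun _ _ _ => by positivity)
  set q : ℚ := (Fintype.card G : ℚ) with hq
  have hq1 : (1 : ℚ) ≤ q := by rw [hq]; exact_mod_cast Fintype.card_pos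
  have hq0 : (0 : ℚ) < q := lt_of_lt_of_le one_pos hq1
  set N : ℚ := (A.card : ℚ) with hN
  have hN0 : (0 : ℚ) ≤ N := Nat.cast_nonneg _
  have h1 : ∑ p : (Fin (n + 1) → G) × G, (η p : ℚ) = 2 ^ (n + 1) * q ^ (n + 1) := by
    rw [← Nat.cast_sum, hS1, hq]
    push_cast
    ring
  have h2 : ∑ p : (Fin (n + 1) → G) × G, (η p : ℚ) ^ 2
      ≤ 2 ^ (n + 1) * q ^ (n + 1) + 2 ^ (n + 1) * 2 ^ (n + 1) * q ^ n := by
    have hc := (Nat.cast_le (α := ℚ)).2 hS2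
    push_cast at hc
    rw [hq]
    convert hc using 2
  have key : ((2 : ℚ) ^ (n + 1) * q ^ (n + 1)) ^ 2
      ≤ N * (2 ^ (n + 1) * q ^ (n + 1) + 2 ^ (n + 1) * 2 ^ (n + 1) * q ^ n) := by
    calc ((2 : ℚ) ^ (n + 1) * q ^ (n + 1)) ^ 2 = (∑ p ∈ A, (η p : ℚ)) ^ 2 := by
          rw [hsum1, h1]
      _ ≤ N * ∑ p ∈ A, (η p : ℚ) ^ 2 := hCS
      _ ≤ _ := mul_le_mul_of_nonneg_left (hsum2.trans h2) hN0
  rw [div_le_iff₀ (by positivity)]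
  have e : N * (2 ^ (n + 1) / q + 1) = N * (2 ^ (n + 1) + q) / q := by
    field_simp
  rw [e, le_div_iff₀ hq0]
  have hc : (0 : ℚ) < 2 ^ (n + 1) * q ^ n := by positivity
  refine le_of_mul_le_mul_right ?_ hc
  calc 2 ^ (n + 1) * q ^ (n + 1) * q * (2 ^ (n + 1) * q ^ n)
      = ((2 : ℚ) ^ (n + 1) * q ^ (n + 1)) ^ 2 := by ring
    _ ≤ N * (2 ^ (n + 1) * q ^ (n + 1) + 2 ^ (n + 1) * 2 ^ (n + 1) * q ^ n) := key
    _ = N * (2 ^ (n + 1) + q) * (2 ^ (n + 1) * q ^ n) := by ring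
end

section
/- The maximal order of an abelian subgroup of S_n is 3^{n/3} for n divisible by 3; more generally it equals f(n) where f(n) = 3^k if n = 3k, f(n) = 4·3^{k−1} if n = 3k+1 (k ≥ 1), and f(n) = 2·3^k if n = 3k+2. -/
/-!
In an abelian group acting on a set, an element is determined on a whole orbit by its value at
one point of it, so an abelian subgroup of `Perm α` embeds into the product of its orbits and its
order is at most a product of positive integers summing to `|α|`. Such a product is maximised by
using as many parts `3` as possible: `f = bercovMoser` satisfies `f (m + 3) = 3 f m` for `m ≠ 1`
and `f a * f b ≤ f (a + b)`. The cyclic groups generated by disjoint cycles of these lengths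
attain the bound.
-/

open Equiv MulAction

def bercovMoser (n : ℕ) : ℕ :=
  if n % 3 = 0 then 3 ^ (n / 3)
  else if n % 3 = 1 then (if n = 1 then 1 else 4 * 3 ^ (n / 3 - 1))
  else 2 * 3 ^ (n / 3)

theorem bercovMoser_add_three {n : ℕ} (hn : n ≠ 1) :
    bercovMoser (n + 3) = 3 * bercovMoser n := by
  obtain ⟨k, rfl | rfl | rfl⟩ : ∃ k, n = 3 * k ∨ n = 3 * k + 4 ∨ n = 3 * k + 2 :=
    ⟨if n % 3 = 1 then n / 3 - 1 else n / 3, by split_ifs <;> omega⟩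
  all_goals simp [bercovMoser, Nat.mul_add_div, pow_succ', mul_left_comm]

theorem le_bercovMoser (n : ℕ) : n ≤ bercovMoser n := by
  induction n using Nat.strong_induction_on with
  | _ n ih =>
    match n, ih with
    | 0, _ | 1, _ | 2, _ | 3, _ | 4, _ => decide
    | n + 5, ih =>
      have := ih (n + 2) (by omega)
      rw [bercovMoser_add_three (n := n + 2) (by omega)]
      omega

theorem bercovMoser_mul_bercovMoser_le (a b : ℕ) :
    bercovMoser a * bercovMoser b ≤ bercovMoser (a + b) := by
  induction h : a + b using Nat.strong_induction_on generalizing a b with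
  | _ n ih =>
    subst h
    by_cases ha : 5 ≤ a
    · obtain ⟨a, rfl⟩ : ∃ a', a = a' + 3 := ⟨a - 3, by omega⟩
      have := ih (a + b) (by omega) a b rfl
      rw [bercovMoser_add_three (by omega), show a + 3 + b = a + b + 3 by ring,
        bercovMoser_add_three (by omega), mul_assoc]
      omega
    by_cases hb : 5 ≤ b
    · obtain ⟨b, rfl⟩ : ∃ b', b = b' + 3 := ⟨b - 3, by omega⟩
      have := ih (a + b) (by omega) a b rfl
      rw [bercovMoser_add_three (by omega), ← add_assoc,
        bercovMoser_add_three (by omega), mul_left_comm]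
      omega
    interval_cases a <;> interval_cases b <;> decide

theorem prod_le_bercovMoser_sum {ι : Type*} (s : Finset ι) (m : ι → ℕ) :
    ∏ i ∈ s, m i ≤ bercovMoser (∑ i ∈ s, m i) := by
  classical
  induction s using Finset.induction_on with
  | empty => simp [bercovMoser]
  | insert a s ha ih =>
    rw [Finset.prod_insert ha, Finset.sum_insert ha]
    exact (Nat.mul_le_mul (le_bercovMoser _) ih).trans (bercovMoser_mul_bercovMoser_le _ _)

theorem exists_list_sum_prod_eq_bercovMoser (n : ℕ) :
    ∃ l : List ℕ, (∀ k ∈ l, 0 < k) ∧ l.sum = n ∧ l.prod = bercovMoser n := by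
  induction n using Nat.strong_induction_on with
  | _ n ih =>
    match n, ih with
    | 0, _ => exact ⟨[], by simp, rfl, rfl⟩
    | 1, _ => exact ⟨[1], by simp, rfl, rfl⟩
    | 2, _ => exact ⟨[2], by simp, rfl, rfl⟩
    | 3, _ => exact ⟨[3], by simp, rfl, rfl⟩
    | 4, _ => exact ⟨[4], by simp, rfl, rfl⟩
    | n + 5, ih =>
      obtain ⟨l, hpos, hsum, hprod⟩ := ih (n + 2) (by omega)
      refine ⟨3 :: l, by simpa using hpos, by rw [List.sum_cons, hsum]; omega, ?_⟩
      rw [List.prod_cons, hprod, ← bercovMoser_add_three (by omega)]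

namespace MulAction

variable {G α : Type*} [Group G] [IsMulCommutative G] [MulAction G α]

theorem smul_eq_smul_of_mem_orbit {g h : G} {x y : α} (hy : y ∈ orbit G x)
    (hx : g • x = h • x) : g • y = h • y := by
  obtain ⟨k, rfl⟩ := hy
  rw [← mul_smul, mul_comm' g, mul_smul, hx, ← mul_smul, mul_comm' k, mul_smul]

theorem card_le_card_pi_orbit [FaithfulSMul G α] [Finite α] :
    Nat.card G ≤ Nat.card (∀ ω : orbitRel.Quotient G α, orbit G ω.out) := by
  refine Nat.card_le_card_of_injective (fun g ω => ⟨g • ω.out, mem_orbit _ _⟩) fun g h hgh => ?_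
  refine eq_of_smul_eq_smul fun x => smul_eq_smul_of_mem_orbit ?_
    (congrArg Subtype.val (congrFun hgh (Quotient.mk (orbitRel G α) x)))
  exact mem_orbit_symm.mp (orbitRel_apply.mp (Quotient.mk_out (s := orbitRel G α) x))

theorem card_le_bercovMoser [FaithfulSMul G α] [Finite α] :
    Nat.card G ≤ bercovMoser (Nat.card α) := by
  have : Fintype (orbitRel.Quotient G α) := Fintype.ofFinite _
  calc Nat.card G ≤ Nat.card (∀ ω : orbitRel.Quotient G α, orbit G ω.out) :=
        card_le_card_pi_orbit
    _ = ∏ ω : orbitRel.Quotient G α, Nat.card (orbit G ω.out) := Nat.card_pi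
    _ ≤ bercovMoser (∑ ω : orbitRel.Quotient G α, Nat.card (orbit G ω.out)) :=
        prod_le_bercovMoser_sum _ _
    _ = bercovMoser (Nat.card α) := by
      rw [← Nat.card_sigma, Nat.card_congr (selfEquivSigmaOrbits G α)]

end MulAction

theorem orderOf_finRotate {n : ℕ} (hn : 0 < n) : orderOf (finRotate n) = n := by
  obtain rfl | hn := (Nat.one_le_iff_ne_zero.mpr hn.ne').eq_or_lt
  · exact orderOf_eq_one_iff.mpr (Subsingleton.elim _ _)
  · rw [(isCycle_finRotate_of_le hn).orderOf, support_finRotate_of_le hn, Finset.card_univ,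
      Fintype.card_fin]

theorem exists_isMulCommutative_subgroup_card_eq_prod {ι α : Type*} [Fintype ι] [Finite α]
    (m : ι → ℕ) (hm : ∀ i, 0 < m i) (hα : Nat.card α = ∑ i, m i) :
    ∃ H : Subgroup (Perm α), IsMulCommutative H ∧ Nat.card H = ∏ i, m i := by
  obtain ⟨e⟩ : Nonempty ((Σ i, Fin (m i)) ≃ α) := by
    rw [← Finite.card_eq, hα, Nat.card_sigma]; simp
  let φ := e.permCongrHom.toMonoidHom.comp <| (Perm.sigmaCongrRightHom _).comp <|
    MonoidHom.piMap fun i => (Subgroup.zpowers (finRotate (m i))).subtype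
  have hφ : Function.Injective φ :=
    e.permCongrHom.injective.comp <| Perm.sigmaCongrRightHom_injective.comp fun x y hxy =>
      funext fun i => Subtype.ext (congrFun hxy i)
  refine ⟨φ.range, ?_, ?_⟩
  · rw [MonoidHom.range_eq_map]
    infer_instance
  · rw [MonoidHom.range_eq_map, Subgroup.card_map_of_injective hφ, Subgroup.card_top, Nat.card_pi]
    simp_rw [Nat.card_zpowers, orderOf_finRotate (hm _)]

theorem max_order_abelian_subgroup_symmetric_group_general (n : ℕ) :
    IsGreatest
      {m : ℕ | ∃ H : Subgroup (Equiv.Perm (Fin n)),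
        (∀ a b : H, a * b = b * a) ∧ Nat.card H = m}
      (if n % 3 = 0 then 3 ^ (n / 3)
       else if n % 3 = 1 then (if n = 1 then 1 else 4 * 3 ^ (n / 3 - 1))
       else 2 * 3 ^ (n / 3)) := by
  change IsGreatest _ (bercovMoser n)
  refine ⟨?_, ?_⟩
  · obtain ⟨l, hpos, hsum, hprod⟩ := exists_list_sum_prod_eq_bercovMoser n
    obtain ⟨H, hH, hcard⟩ := exists_isMulCommutative_subgroup_card_eq_prod (α := Fin n)
      (fun i : Fin l.length => l[(i : ℕ)]) (fun i => hpos _ (List.getElem_mem _))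
      (by rw [Fin.sum_univ_getElem, hsum, Nat.card_fin])
    exact ⟨H, isMulCommutative_iff.mp hH, by rw [hcard, Fin.prod_univ_getElem, hprod]⟩
  · rintro _ ⟨H, hH, rfl⟩
    have := isMulCommutative_iff.mpr hH
    simpa using card_le_bercovMoser (G := H) (α := Fin n)

/-- Bercov–Moser: the maximal order of an abelian subgroup of `S_n` is `3^k` if `n = 3k`,
`4·3^{k−1}` if `n = 3k+1` with `k ≥ 1`, and `2·3^k` if `n = 3k+2` (and `1` for `n = 1`). -/
theorem max_order_abelian_subgroup_symmetric_group (n : ℕ) (hn : 1 ≤ n) :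
    IsGreatest
      {m : ℕ | ∃ H : Subgroup (Equiv.Perm (Fin n)),
        (∀ a b : H, a * b = b * a) ∧ Nat.card H = m}
      (if n % 3 = 0 then 3 ^ (n / 3)
       else if n % 3 = 1 then (if n = 1 then 1 else 4 * 3 ^ (n / 3 - 1))
       else 2 * 3 ^ (n / 3)) :=
  max_order_abelian_subgroup_symmetric_group_general n
end

section
/- Let G be a finite group with irreducible representations indexed by Ĝ. Let γ₁^{(1)} be the k=1 hidden shift state averaged over uniform s ∈ G, i.e. γ₁^{(1)} = (1/(2|G|²)) ∑_{s∈G} [[I, R(s)],[R(s⁻¹), I]]. Then rank γ₁^{(1)} = 2|G| − 1. -/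
/-!
Averaging over `s` turns the off-diagonal blocks `R(s)` and `R(s⁻¹)` into the all-ones matrix `J`,
since for fixed `h, g` exactly one `s` satisfies `g = h * s`. A kernel vector `(a, b)` of
`[[|G| I, J], [J, |G| I]]` has constant halves `a = α 1`, `b = β 1` with `|G| (α + β) = 0`, so the
kernel is the line spanned by `(1, -1)` and rank–nullity gives `2 |G| - 1`.
-/

open Matrix

namespace Matrix

section RightRegular

variable {G R : Type*} [Group G] [Fintype G] [DecidableEq G] [AddCommMonoidWithOne R]

theorem sum_rightRegular :
    ∑ s : G, (of fun h g : G => if g = h * s then (1 : R) else 0) = of fun _ _ => 1 := by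
  ext h g
  simp [sum_apply, ← inv_mul_eq_iff_eq_mul]

theorem sum_rightRegular_inv :
    ∑ s : G, (of fun h g : G => if g = h * s⁻¹ then (1 : R) else 0) = of fun _ _ => 1 :=
  (Equiv.sum_comp (Equiv.inv G) fun s => of fun h g : G => if g = h * s then (1 : R) else 0).trans
    sum_rightRegular

end RightRegular

theorem sum_fromBlocks {ι l m n o α : Type*} [AddCommMonoid α] (s : Finset ι)
    (A : ι → Matrix n l α) (B : ι → Matrix n m α) (C : ι → Matrix o l α) (D : ι → Matrix o m α) :
    ∑ i ∈ s, fromBlocks (A i) (B i) (C i) (D i) =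
      fromBlocks (∑ i ∈ s, A i) (∑ i ∈ s, B i) (∑ i ∈ s, C i) (∑ i ∈ s, D i) := by
  ext (j | j) (k | k) <;> simp [sum_apply]

theorem allOnes_mulVec {n α : Type*} [Fintype n] [NonAssocSemiring α] (x : n → α) :
    (of fun _ _ : n => (1 : α)) *ᵥ x = fun _ => ∑ i, x i := by
  ext; simp [mulVec, dotProduct]

section AllOnesBlocks

variable {n K : Type*} [Fintype n] [DecidableEq n] [Field K]

local notation "c" => (Fintype.card n : K)
local notation "J" => (of fun _ _ : n => (1 : K))

theorem fromBlocks_card_smul_one_allOnes_mulVec_eq_zero_iff (hn : c ≠ 0) (x : n ⊕ n → K) :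
    fromBlocks (c • 1) J J (c • 1) *ᵥ x = 0 ↔ ∃ t : K, t • (Sum.elim 1 (-1) : n ⊕ n → K) = x := by
  simp only [fromBlocks_mulVec, smul_mulVec, one_mulVec, allOnes_mulVec, funext_iff, Sum.forall,
    Sum.elim_inl, Sum.elim_inr, Pi.add_apply, Pi.smul_apply, Function.comp_apply, smul_eq_mul,
    Pi.zero_apply, Pi.one_apply, Pi.neg_apply, mul_one, mul_neg]
  constructor
  · rintro ⟨hl, hr⟩
    have hsum : ∑ i, x (.inl i) = -∑ i, x (.inr i) := by
      have := Finset.sum_eq_zero fun i (_ : i ∈ Finset.univ) => hl i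
      simp only [Finset.sum_add_distrib, ← Finset.mul_sum, Finset.sum_const, Finset.card_univ,
        nsmul_eq_mul] at this
      exact mul_left_cancel₀ hn (by linear_combination this)
    refine ⟨-(∑ i, x (.inr i)) / c, fun i => ?_, fun i => ?_⟩
    · field_simp; linear_combination -hl i
    · field_simp; linear_combination hsum - hr i
  · rintro ⟨t, hl, hr⟩
    simp only [← hl, ← hr, Finset.sum_neg_distrib, Finset.sum_const, Finset.card_univ, nsmul_eq_mul]
    constructor <;> intro <;> ring

theorem rank_fromBlocks_card_smul_one_allOnes (hn : c ≠ 0) :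
    (fromBlocks (c • 1) J J (c • 1)).rank = 2 * Fintype.card n - 1 := by
  obtain ⟨i⟩ : Nonempty n :=
    Fintype.card_pos_iff.mp (Nat.pos_of_ne_zero fun h => hn (by simp [h]))
  have hker : LinearMap.ker (fromBlocks (c • 1) J J (c • 1)).mulVecLin =
      K ∙ (Sum.elim 1 (-1) : n ⊕ n → K) := by
    ext x
    simp [Submodule.mem_span_singleton, fromBlocks_card_smul_one_allOnes_mulVec_eq_zero_iff hn]
  have hv : (Sum.elim 1 (-1) : n ⊕ n → K) ≠ 0 := fun h => by simpa using congrFun h (.inl i)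
  have hdim := (fromBlocks (c • 1) J J (c • 1)).mulVecLin.finrank_range_add_finrank_ker
  rw [hker, finrank_span_singleton hv, Module.finrank_fintype_fun_eq_card, Fintype.card_sum] at hdim
  rw [rank]
  omega

end AllOnesBlocks

end Matrix

/-- The rank of the averaged (k = 1) hidden shift state
`γ₁^{(1)} = (1/(2|G|²)) ∑_s [[I, R(s)],[R(s⁻¹), I]]` equals `2|G| − 1`. -/
theorem rank_averaged_hidden_shift_state_one
    {G : Type*} [Group G] [Fintype G] [DecidableEq G] :
    ((2 * (Fintype.card G : ℂ) ^ 2)⁻¹ • ∑ s : G,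
        Matrix.fromBlocks 1
          (Matrix.of fun h g : G => if g = h * s then (1 : ℂ) else 0)
          (Matrix.of fun h g : G => if g = h * s⁻¹ then (1 : ℂ) else 0) 1).rank
      = 2 * Fintype.card G - 1 := by
  have hG : (Fintype.card G : ℂ) ≠ 0 := Nat.cast_ne_zero.2 Fintype.card_ne_zero
  rw [rank_smul_of_mem_nonZeroDivisors _ (mem_nonZeroDivisors_of_ne_zero (by simp [hG])),
    sum_fromBlocks, sum_rightRegular, sum_rightRegular_inv, Finset.sum_const, Finset.card_univ,
    ← Nat.cast_smul_eq_nsmul ℂ]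
  exact rank_fromBlocks_card_smul_one_allOnes hG
end

section
/- For the symmetric group G = S_n with n ≥ 2, the rank of γ₁^{(2)} := (1/|S_n|) ∑_{s} γ₁(s)^{⊗2} equals 4(n!)² − 5·n! + 1. -/
set_option linter.unusedSectionVars false
open Equiv Equiv.Perm



section KInv
variable {α : Type*} [DecidableEq α] [Fintype α] (k : Perm α → ℂ)
variable (hk : ∀ a b s : Perm α, k (a * b * s) = k (a * s * b))

include hk

lemma k_cyc (x y : Perm α) : k (x * y) = k (y * x) := by
  have := hk 1 x y; simpa using this

lemma k_comm (t b s : Perm α) : k (t * (b⁻¹ * s⁻¹ * b * s)) = k t := by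
  have h := hk (t * b⁻¹ * s⁻¹) b s
  have h1 : t * b⁻¹ * s⁻¹ * b * s = t * (b⁻¹ * s⁻¹ * b * s) := by group
  have h2 : t * b⁻¹ * s⁻¹ * s * b = t := by group
  rw [h1, h2] at h
  exact h

lemma k_pair_shared (u : Perm α) {a b c : α} (hab : a ≠ b) (hac : a ≠ c) (hbc : b ≠ c) :
    k (u * (swap a b * swap a c)) = k u := by
  set δ := swap a b * swap a c with hδ
  have h3 : δ ^ 3 = 1 := by
    have := (isThreeCycle_swap_mul_swap_same hab hac hbc).orderOf
    rw [← hδ] at this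
    rw [← this]; exact pow_orderOf_eq_one δ
  have hc := k_comm k hk (u * δ) (swap a b) (swap a c)
  simp only [swap_inv] at hc
  have h' : swap a b * swap a c * swap a b * swap a c = δ * δ := by rw [hδ]; group
  rw [h'] at hc
  rw [pow_succ, pow_two] at h3
  have h'' : u * δ * (δ * δ) = u := by
    rw [show u * δ * (δ * δ) = u * (δ * δ * δ) by group, h3, mul_one]
  rw [h''] at hc
  exact hc.symm

lemma k_pair (u : Perm α) {a b c d : α} (hab : a ≠ b) (hcd : c ≠ d) :
    k (u * (swap a b * swap c d)) = k u := by
  rcases eq_or_ne a c with h1 | h1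
  · rw [← h1]
    rcases eq_or_ne b d with h2 | h2
    · rw [← h2, swap_mul_self, mul_one]
    · exact k_pair_shared k hk u hab (h1 ▸ hcd) h2
  · rcases eq_or_ne a d with h2 | h2
    · rw [← h2, swap_comm c a]
      rcases eq_or_ne b c with h3 | h3
      · rw [← h3, swap_mul_self, mul_one]
      · exact k_pair_shared k hk u hab h1 h3
    · rcases eq_or_ne b c with h3 | h3
      · rw [← h3, swap_comm a b]
        have hbd : b ≠ d := h3 ▸ hcd
        exact k_pair_shared k hk u (Ne.symm hab) hbd h2
      · rcases eq_or_ne b d with h4 | h4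
        · rw [← h4, swap_comm a b, swap_comm c b]
          exact k_pair_shared k hk u (Ne.symm hab) h3 h1
        · have key : swap a b * swap c d = (swap a b * swap a c) * (swap c a * swap c d) := by
            rw [swap_comm c a, mul_assoc (swap a b), ← mul_assoc (swap a c), swap_mul_self,
              one_mul]
          rw [key, ← mul_assoc]
          rw [k_pair_shared k hk (u * (swap a b * swap a c)) (Ne.symm h1) hcd h2]
          exact k_pair_shared k hk u hab h1 h3

lemma k_even_list : ∀ (l : List (Perm α)), (∀ τ ∈ l, τ.IsSwap) → Even l.length →
    ∀ u, k (u * l.prod) = k u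
  | [], _, _, u => by simp
  | [τ], hs, he, u => by simp at he
  | τ₁ :: τ₂ :: rest, hs, he, u => by
    have hrest : ∀ τ ∈ rest, τ.IsSwap := fun τ hτ => hs _ (by simp [hτ])
    have herest : Even rest.length := by
      rcases he with ⟨m, hm⟩
      simp only [List.length_cons] at hm
      exact ⟨m - 1, by omega⟩
    obtain ⟨a, b, hab, h1⟩ := hs τ₁ (by simp)
    obtain ⟨c, d, hcd, h2⟩ := hs τ₂ (by simp)
    have hp : (τ₁ :: τ₂ :: rest).prod = τ₁ * (τ₂ * rest.prod) := by
      simp [List.prod_cons]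
    rw [hp, h1, h2,
      show u * (swap a b * (swap c d * rest.prod))
        = (u * swap a b * swap c d) * rest.prod by group,
      k_cyc k hk,
      show rest.prod * (u * swap a b * swap c d)
        = (rest.prod * u) * (swap a b * swap c d) by group,
      k_pair k hk _ hab hcd, k_cyc k hk]
    exact k_even_list rest hrest herest u

lemma k_even (σ : Perm α) (hσ : Equiv.Perm.sign σ = 1) (u : Perm α) : k (u * σ) = k u := by
  obtain ⟨l, hl, hsw⟩ := (Equiv.Perm.truncSwapFactors σ).out
  have hsign : (-1 : ℤˣ) ^ l.length = 1 := by
    rw [← Equiv.Perm.sign_prod_list_swap hsw, hl, hσ]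
  have hev : Even l.length := by
    rwa [neg_one_pow_eq_one_iff_even (by decide)] at hsign
  rw [← hl]
  exact k_even_list k hk l hsw hev u

end KInv

noncomputable def ee {n : ℕ} (σ : Perm (Fin n)) : ℂ := ((Equiv.Perm.sign σ : ℤ) : ℂ)

lemma ee_mul {n : ℕ} (a b : Perm (Fin n)) : ee (a * b) = ee a * ee b := by
  simp [ee, map_mul]

lemma ee_one {n : ℕ} : ee (1 : Perm (Fin n)) = 1 := by simp [ee]

lemma ee_eq {n : ℕ} (σ : Perm (Fin n)) : ee σ = 1 ∨ ee σ = -1 := by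
  rcases Int.units_eq_one_or (Equiv.Perm.sign σ) with h | h <;> simp [ee, h]

lemma ee_sq {n : ℕ} (σ : Perm (Fin n)) : ee σ * ee σ = 1 := by
  rcases ee_eq σ with h | h <;> rw [h] <;> ring

def tau0 (n : ℕ) (hn : 2 ≤ n) : Perm (Fin n) := swap ⟨0, by omega⟩ ⟨1, by omega⟩

lemma tau0_ne {n : ℕ} (hn : 2 ≤ n) : (⟨0, by omega⟩ : Fin n) ≠ ⟨1, by omega⟩ := by
  intro h; simpa using congrArg Fin.val h

section Two
variable {n : ℕ} (hn : 2 ≤ n)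
include hn

lemma ee_tau0 : ee (tau0 n hn) = -1 := by
  simp [ee, tau0, Equiv.Perm.sign_swap (tau0_ne hn)]

lemma sum_ee : ∑ σ : Perm (Fin n), ee σ = 0 := by
  have h : ∑ σ : Perm (Fin n), ee (tau0 n hn * σ) = ∑ σ : Perm (Fin n), ee σ :=
    Fintype.sum_equiv (Equiv.mulLeft (tau0 n hn)) _ _ (fun σ => rfl)
  replace h := h.symm
  have h2 : ∑ σ : Perm (Fin n), ee (tau0 n hn * σ)
      = -∑ σ : Perm (Fin n), ee σ := by
    rw [← Finset.sum_neg_distrib]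
    refine Finset.sum_congr rfl fun σ _ => ?_
    rw [ee_mul, ee_tau0 hn]; ring
  have h3 := h.trans h2
  have : (2 : ℂ) * ∑ σ : Perm (Fin n), ee σ = 0 := by linear_combination h3
  exact (mul_eq_zero.mp this).resolve_left two_ne_zero

lemma k_form (k : Perm (Fin n) → ℂ)
    (hk : ∀ a b s : Perm (Fin n), k (a * b * s) = k (a * s * b)) :
    ∃ p q : ℂ, ∀ t, k t = p + q * ee t := by
  refine ⟨(k 1 + k (tau0 n hn)) / 2, (k 1 - k (tau0 n hn)) / 2, fun t => ?_⟩
  rcases Int.units_eq_one_or (Equiv.Perm.sign t) with h | h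
  · have h1 : k t = k 1 := by
      have := k_even k hk t h 1
      rwa [one_mul] at this
    have h2 : ee t = 1 := by simp [ee, h]
    rw [h1, h2]; ring
  · have hs : Equiv.Perm.sign (tau0 n hn * t) = 1 := by
      rw [map_mul, h, tau0, Equiv.Perm.sign_swap (tau0_ne hn)]; rfl
    have h1 : k t = k (tau0 n hn) := by
      have := k_even k hk (tau0 n hn * t) hs (tau0 n hn)
      rwa [show tau0 n hn * (tau0 n hn * t) = t by
        rw [← mul_assoc, tau0, swap_mul_self, one_mul]] at this
    have h2 : ee t = -1 := by simp [ee, h]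
    rw [h1, h2]; ring

end Two
section Solve
variable {n : ℕ}

lemma sum_shift (b : Perm (Fin n)) (f : Perm (Fin n) → ℂ) :
    ∑ s : Perm (Fin n), f (b * s) = ∑ s : Perm (Fin n), f s :=
  Fintype.sum_equiv (Equiv.mulLeft b) _ f (fun _ => rfl)

lemma sum_shift_inv (c : Perm (Fin n)) (f : Perm (Fin n) → ℂ) :
    ∑ s : Perm (Fin n), f (c * s⁻¹) = ∑ s : Perm (Fin n), f s :=
  Fintype.sum_equiv ((Equiv.inv (Perm (Fin n))).trans (Equiv.mulLeft c)) _ f (fun _ => rfl)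

lemma sum_diag2 (a b : Perm (Fin n)) (h : Perm (Fin n) → Perm (Fin n) → ℂ) :
    ∑ s : Perm (Fin n), h (a * s) (b * s) = ∑ u : Perm (Fin n), h u (b * a⁻¹ * u) :=
  Fintype.sum_equiv (Equiv.mulLeft a) _ _ (fun s => by
    have : b * a⁻¹ * (a * s) = b * s := by group
    rw [Equiv.coe_mulLeft, this])

lemma sum_diag_inv (c d : Perm (Fin n)) (h : Perm (Fin n) → Perm (Fin n) → ℂ) :
    ∑ s : Perm (Fin n), h (c * s⁻¹) (d * s⁻¹) = ∑ u : Perm (Fin n), h u (d * c⁻¹ * u) :=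
  Fintype.sum_equiv ((Equiv.inv (Perm (Fin n))).trans (Equiv.mulLeft c)) _ _ (fun s => by
    have : d * c⁻¹ * (c * s⁻¹) = d * s⁻¹ := by group
    simp only [Equiv.trans_apply, Equiv.inv_apply, Equiv.coe_mulLeft, this])

lemma solve (hn : 2 ≤ n) (x y z w : Perm (Fin n) → Perm (Fin n) → ℂ)
    (heq : ∀ a b s, x a b + y a (b * s) + z (a * s) b + w (a * s) (b * s) = 0) :
    ∃ (A B C D Qf : Perm (Fin n) → ℂ) (q : ℂ),
      (∀ a b, x a b = -A a - B b - Qf (b * a⁻¹)) ∧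
      (∀ a d, y a d = A a + D d + q * ee (a * d)) ∧
      (∀ c b, z c b = C c + B b - q * ee (c * b)) ∧
      (∀ c d, w c d = -C c - D d + Qf (d * c⁻¹)) := by
  set N : ℂ := (Fintype.card (Perm (Fin n)) : ℂ) with hNdef
  have hN : N ≠ 0 := Nat.cast_ne_zero.mpr Fintype.card_ne_zero
  set y1 : Perm (Fin n) → ℂ := fun a => N⁻¹ * ∑ d, y a d with hy1
  set y2 : Perm (Fin n) → ℂ := fun d => N⁻¹ * ∑ a, y a d with hy2
  set z1 : Perm (Fin n) → ℂ := fun c => N⁻¹ * ∑ b, z c b with hz1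
  set z2 : Perm (Fin n) → ℂ := fun b => N⁻¹ * ∑ c, z c b with hz2
  set Q0 : Perm (Fin n) → ℂ := fun g => N⁻¹ * ∑ u, w u (g * u) with hQ0
  set P0 : Perm (Fin n) → ℂ := fun g => N⁻¹ * ∑ u, x u (g * u) with hP0
  set ybar : ℂ := N⁻¹ * ∑ a, y1 a with hybar
  set zbar : ℂ := N⁻¹ * ∑ c, z1 c with hzbar
  have hybar2 : ybar = N⁻¹ * ∑ d, y2 d := by
    rw [hybar, hy2]
    simp only [hy1, ← Finset.mul_sum]
    rw [Finset.sum_comm]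
  have hzbar2 : zbar = N⁻¹ * ∑ b, z2 b := by
    rw [hzbar, hz2]
    simp only [hz1, ← Finset.mul_sum]
    rw [Finset.sum_comm]
  -- (X)
  have hX : ∀ a b, x a b = -(y1 a) - z2 b - Q0 (b * a⁻¹) := by
    intro a b
    have h0 : ∑ s : Perm (Fin n), (x a b + y a (b * s) + z (a * s) b + w (a * s) (b * s)) = 0 :=
      Finset.sum_eq_zero fun s _ => heq a b s
    rw [Finset.sum_add_distrib, Finset.sum_add_distrib, Finset.sum_add_distrib,
      Finset.sum_const, sum_shift b (fun d => y a d), sum_shift a (fun c => z c b),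
      sum_diag2 a b w, Finset.card_univ, nsmul_eq_mul] at h0
    have h1 : N * x a b
        = -(∑ d, y a d) - (∑ c, z c b) - (∑ u, w u (b * a⁻¹ * u)) := by
      rw [hNdef]; linear_combination h0
    have h2 : x a b = N⁻¹ * (N * x a b) := by
      rw [← mul_assoc, inv_mul_cancel₀ hN, one_mul]
    simp only [hy1, hz2, hQ0]
    rw [h2, h1]; ring
  -- (W)
  have hW : ∀ c d, w c d = -(z1 c) - y2 d - P0 (d * c⁻¹) := by
    intro c d
    have h0 : ∑ s : Perm (Fin n),
        (x (c * s⁻¹) (d * s⁻¹) + y (c * s⁻¹) d + z c (d * s⁻¹) + w c d) = 0 := by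
      refine Finset.sum_eq_zero fun s _ => ?_
      have h := heq (c * s⁻¹) (d * s⁻¹) s
      have e1 : c * s⁻¹ * s = c := by group
      have e2 : d * s⁻¹ * s = d := by group
      rwa [e1, e2] at h
    rw [Finset.sum_add_distrib, Finset.sum_add_distrib, Finset.sum_add_distrib,
      Finset.sum_const, sum_diag_inv c d x, sum_shift_inv c (fun u => y u d),
      sum_shift_inv d (fun v => z c v), Finset.card_univ, nsmul_eq_mul] at h0
    have h1 : N * w c d
        = -(∑ b, z c b) - (∑ a, y a d) - (∑ u, x u (d * c⁻¹ * u)) := by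
      rw [hNdef]; linear_combination h0
    have h2 : w c d = N⁻¹ * (N * w c d) := by
      rw [← mul_assoc, inv_mul_cancel₀ hN, one_mul]
    simp only [hz1, hy2, hP0]
    rw [h2, h1]; ring
  -- (PQ)
  have hPQ : ∀ g, P0 g + Q0 g = -ybar - zbar := by
    intro g
    have hstep : P0 g = N⁻¹ * ∑ u, (-(y1 u) - z2 (g * u) - Q0 g) := by
      rw [hP0]
      simp only []
      congr 1
      refine Finset.sum_congr rfl fun u _ => ?_
      have h0 := hX u (g * u)
      have e : g * u * u⁻¹ = g := by group
      rw [h0, e]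
    have hsplit : ∑ u : Perm (Fin n), (-(y1 u) - z2 (g * u) - Q0 g)
        = -(∑ u, y1 u) - (∑ b, z2 b) - N * Q0 g := by
      rw [Finset.sum_sub_distrib, Finset.sum_sub_distrib, Finset.sum_neg_distrib,
        Finset.sum_const, sum_shift g z2, Finset.card_univ, nsmul_eq_mul, hNdef]
    rw [hstep, hsplit, hybar, hzbar2]
    have : N⁻¹ * N = 1 := inv_mul_cancel₀ hN
    calc N⁻¹ * (-(∑ u, y1 u) - (∑ b, z2 b) - N * Q0 g) + Q0 g
        = -(N⁻¹ * ∑ u, y1 u) - N⁻¹ * (∑ b, z2 b) - (N⁻¹ * N) * Q0 g + Q0 g := by ring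
      _ = -(N⁻¹ * ∑ a, y1 a) - N⁻¹ * ∑ b, z2 b := by rw [this]; ring
  -- centered parts
  set yh : Perm (Fin n) → Perm (Fin n) → ℂ := fun a d => y a d - y1 a - y2 d + ybar with hyh
  set zh : Perm (Fin n) → Perm (Fin n) → ℂ := fun c b => z c b - z1 c - z2 b + zbar with hzh
  have hH : ∀ a b s, yh a (b * s) + zh (a * s) b = 0 := by
    intro a b s
    have h := heq a b s
    have hx := hX a b
    have hw := hW (a * s) (b * s)
    have e : b * s * (a * s)⁻¹ = b * a⁻¹ := by group
    rw [e] at hw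
    have hpq := hPQ (b * a⁻¹)
    simp only [hyh, hzh]
    linear_combination h - hx - hw + hpq
  have hyz : ∀ a b, yh a b = -zh a b := by
    intro a b
    have h := hH a b 1
    rw [mul_one, mul_one] at h
    linear_combination h
  have hS : ∀ a b s, yh a (b * s) = yh (a * s) b := by
    intro a b s
    have h1 := hH a b s
    have h2 := hyz (a * s) b
    linear_combination h1 - h2
  set k : Perm (Fin n) → ℂ := fun u => yh u 1 with hkdef
  have hyk : ∀ a d, yh a d = k (a * d) := by
    intro a d
    have h := hS a 1 d
    rw [one_mul] at h
    exact h
  have hkk : ∀ a b s, k (a * b * s) = k (a * s * b) := by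
    intro a b s
    rw [mul_assoc a b s]
    rw [← hyk a (b * s), ← hyk (a * s) b]
    exact hS a b s
  obtain ⟨p, q, hkform⟩ := k_form hn k hkk
  -- average of k is zero
  have e1 : ∑ a, y a 1 = N * y2 1 := by
    rw [hy2, ← mul_assoc, mul_inv_cancel₀ hN, one_mul]
  have e2 : ∑ u, y1 u = N * ybar := by
    rw [hybar, ← mul_assoc, mul_inv_cancel₀ hN, one_mul]
  have havg : ∑ u, k u = 0 := by
    have hsum : ∑ u, k u = (∑ u, y u 1) - (∑ u, y1 u) - N * y2 1 + N * ybar := by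
      simp only [hkdef, hyh]
      rw [Finset.sum_add_distrib, Finset.sum_sub_distrib, Finset.sum_sub_distrib,
        Finset.sum_const, Finset.sum_const, Finset.card_univ, nsmul_eq_mul, nsmul_eq_mul,
        ← hNdef]
    rw [hsum, e1, e2]; ring
  have hp0 : p = 0 := by
    have h1 : ∑ u, k u = N * p + q * ∑ u : Perm (Fin n), ee u := by
      rw [Finset.sum_congr rfl (fun u _ => hkform u), Finset.sum_add_distrib,
        Finset.sum_const, Finset.card_univ, nsmul_eq_mul, ← hNdef, ← Finset.mul_sum]
    rw [havg, sum_ee hn] at h1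
    have h2 : N * p = 0 := by linear_combination -h1
    exact (mul_eq_zero.mp h2).resolve_left hN
  -- assemble
  refine ⟨fun a => y1 a - ybar, z2, fun c => z1 c - zbar, y2, fun g => Q0 g + ybar, q,
    fun a b => ?_, fun a d => ?_, fun c b => ?_, fun c d => ?_⟩
  · rw [hX a b]; ring
  · have h := hyk a d
    simp only [hyh] at h
    linear_combination h + hkform (a * d) + hp0
  · have h1 := hyz c b
    have h2 := hyk c b
    simp only [hyh, hzh] at h1 h2
    linear_combination h1 - h2 - hkform (c * b) - hp0
  · rw [hW c d]
    linear_combination -hPQ (d * c⁻¹)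

end Solve
section LinAlg
variable (n : ℕ)

/-- The solution space of the functional equation. -/
noncomputable def Kspace : Submodule ℂ (((Perm (Fin n) ⊕ Perm (Fin n)) × (Perm (Fin n) ⊕ Perm (Fin n))) → ℂ) where
  carrier := {v | ∀ a b s : Perm (Fin n),
    v (Sum.inl a, Sum.inl b) + v (Sum.inl a, Sum.inr (b * s))
      + v (Sum.inr (a * s), Sum.inl b) + v (Sum.inr (a * s), Sum.inr (b * s)) = 0}
  add_mem' := by
    intro v u hv hu a b s
    have h1 := hv a b s
    have h2 := hu a b s
    simp only [Pi.add_apply]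
    linear_combination h1 + h2
  zero_mem' := by intro a b s; simp
  smul_mem' := by
    intro c v hv a b s
    have h1 := hv a b s
    simp only [Pi.smul_apply, smul_eq_mul]
    linear_combination c * h1

abbrev Pspace := (Perm (Fin n) → ℂ) × (Perm (Fin n) → ℂ) × (Perm (Fin n) → ℂ)
  × (Perm (Fin n) → ℂ) × (Perm (Fin n) → ℂ) × ℂ

/-- The parametrization of the solution space. -/
noncomputable def Phi : Pspace n →ₗ[ℂ]
    (((Perm (Fin n) ⊕ Perm (Fin n)) × (Perm (Fin n) ⊕ Perm (Fin n))) → ℂ) where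
  toFun p := fun r => match r with
    | (Sum.inl a, Sum.inl b) => -p.1 a - p.2.1 b - p.2.2.2.2.1 (b * a⁻¹)
    | (Sum.inl a, Sum.inr d) => p.1 a + p.2.2.2.1 d + p.2.2.2.2.2 * ee (a * d)
    | (Sum.inr c, Sum.inl b) => p.2.2.1 c + p.2.1 b - p.2.2.2.2.2 * ee (c * b)
    | (Sum.inr c, Sum.inr d) => -p.2.2.1 c - p.2.2.2.1 d + p.2.2.2.2.1 (d * c⁻¹)
  map_add' p r := by
    funext pt
    rcases pt with ⟨a | c, b | d⟩ <;>
      simp only [Prod.fst_add, Prod.snd_add, Pi.add_apply] <;> ring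
  map_smul' m p := by
    funext pt
    rcases pt with ⟨a | c, b | d⟩ <;>
      simp only [Prod.smul_fst, Prod.smul_snd, Pi.smul_apply, smul_eq_mul,
        RingHom.id_apply] <;> ring

variable {n}

lemma range_Phi (hn : 2 ≤ n) : LinearMap.range (Phi n) = Kspace n := by
  apply le_antisymm
  · rintro v ⟨p, rfl⟩
    intro a b s
    show (-p.1 a - p.2.1 b - p.2.2.2.2.1 (b * a⁻¹))
        + (p.1 a + p.2.2.2.1 (b * s) + p.2.2.2.2.2 * ee (a * (b * s)))
        + (p.2.2.1 (a * s) + p.2.1 b - p.2.2.2.2.2 * ee ((a * s) * b))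
        + (-p.2.2.1 (a * s) - p.2.2.2.1 (b * s) + p.2.2.2.2.1 ((b * s) * (a * s)⁻¹)) = 0
    have e1 : (b * s) * (a * s)⁻¹ = b * a⁻¹ := by group
    have e2 : ee (a * (b * s)) = ee ((a * s) * b) := by
      rw [ee_mul, ee_mul, ee_mul, ee_mul]; ring
    rw [e1, e2]; ring
  · intro v hv
    obtain ⟨A, B, C, D, Qf, q, h1, h2, h3, h4⟩ :=
      solve hn (fun a b => v (Sum.inl a, Sum.inl b)) (fun a d => v (Sum.inl a, Sum.inr d))
        (fun c b => v (Sum.inr c, Sum.inl b)) (fun c d => v (Sum.inr c, Sum.inr d))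
        (fun a b s => hv a b s)
    refine ⟨(A, B, C, D, Qf, q), ?_⟩
    funext pt
    rcases pt with ⟨a | c, b | d⟩
    · exact (h1 a b).symm
    · exact (h2 a d).symm
    · exact (h3 c b).symm
    · exact (h4 c d).symm

variable (n)

noncomputable def psi : (ℂ × ℂ) →ₗ[ℂ] Pspace n where
  toFun v := (fun _ => v.1, fun _ => v.2, fun _ => -v.2, fun _ => -v.1, fun _ => -v.1 - v.2, 0)
  map_add' v u := by
    refine Prod.ext ?_ (Prod.ext ?_ (Prod.ext ?_ (Prod.ext ?_ (Prod.ext ?_ ?_)))) <;>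
      (try funext g) <;>
      simp only [Prod.fst_add, Prod.snd_add, Pi.add_apply, add_zero] <;> ring
  map_smul' m v := by
    refine Prod.ext ?_ (Prod.ext ?_ (Prod.ext ?_ (Prod.ext ?_ (Prod.ext ?_ ?_)))) <;>
      (try funext g) <;>
      simp only [Prod.smul_fst, Prod.smul_snd, Pi.smul_apply, smul_eq_mul,
        RingHom.id_apply, mul_zero, smul_zero] <;> ring

variable {n}

lemma ker_Phi (hn : 2 ≤ n) : LinearMap.ker (Phi n) = LinearMap.range (psi n) := by
  apply le_antisymm
  · rintro ⟨A, B, C, D, Qf, q⟩ hp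
    have hp' : ∀ pt, Phi n (A, B, C, D, Qf, q) pt = 0 := fun pt => congrFun hp pt
    have hy : ∀ a d : Perm (Fin n), A a + D d + q * ee (a * d) = 0 :=
      fun a d => hp' (Sum.inl a, Sum.inr d)
    have hz : ∀ c b : Perm (Fin n), C c + B b - q * ee (c * b) = 0 :=
      fun c b => hp' (Sum.inr c, Sum.inl b)
    have hx : ∀ a b : Perm (Fin n), -A a - B b - Qf (b * a⁻¹) = 0 :=
      fun a b => hp' (Sum.inl a, Sum.inl b)
    -- q = 0
    have hq : q = 0 := by
      have e11 := hy 1 1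
      have e1t := hy 1 (tau0 n hn)
      have et1 := hy (tau0 n hn) 1
      have ett := hy (tau0 n hn) (tau0 n hn)
      simp only [one_mul, mul_one] at e11 e1t et1
      have htt : tau0 n hn * tau0 n hn = 1 := by rw [tau0, swap_mul_self]
      rw [htt] at ett
      rw [ee_one] at e11 ett
      rw [ee_tau0 hn] at e1t et1
      have h4 : (4 : ℂ) * q = 0 := by linear_combination e11 + ett - e1t - et1
      have := mul_eq_zero.mp h4
      rcases this with h | h
      · norm_num at h
      · exact h
    have hA : ∀ a, A a = A 1 := by
      intro a
      have h1 := hy a 1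
      have h2 := hy 1 1
      rw [hq] at h1 h2
      linear_combination h1 - h2
    have hD : ∀ d, D d = -A 1 := by
      intro d
      have h1 := hy 1 d
      rw [hq] at h1
      linear_combination h1
    have hB : ∀ b, B b = B 1 := by
      intro b
      have h1 := hz 1 b
      have h2 := hz 1 1
      rw [hq] at h1 h2
      linear_combination h1 - h2
    have hC : ∀ c, C c = -B 1 := by
      intro c
      have h1 := hz c 1
      rw [hq] at h1
      linear_combination h1
    have hQf : ∀ g, Qf g = -A 1 - B 1 := by
      intro g
      have h1 := hx 1 g
      rw [inv_one, mul_one] at h1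
      have h2 := hB g
      linear_combination -h1 - h2
    refine ⟨(A 1, B 1), ?_⟩
    show ((fun _ => A 1, fun _ => B 1, fun _ => -(B 1), fun _ => -(A 1),
      fun _ => -(A 1) - B 1, (0:ℂ)) : Pspace n) = (A, B, C, D, Qf, q)
    refine Prod.ext ?_ (Prod.ext ?_ (Prod.ext ?_ (Prod.ext ?_ (Prod.ext ?_ ?_))))
    · funext a; exact (hA a).symm
    · funext b; exact (hB b).symm
    · funext c; exact (hC c).symm
    · funext d; exact (hD d).symm
    · funext g; exact (hQf g).symm
    · exact hq.symm
  · rintro p ⟨⟨α, β⟩, rfl⟩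
    have : Phi n (psi n (α, β)) = 0 := by
      funext pt
      rcases pt with ⟨a | c, b | d⟩ <;>
        (show _ = (0:ℂ)) <;>
        simp only [psi, Phi, LinearMap.coe_mk, AddHom.coe_mk] <;>
        ring
    exact this

lemma finrank_Kspace (hn : 2 ≤ n) :
    Module.finrank ℂ (Kspace n) = 5 * Fintype.card (Perm (Fin n)) - 1 := by
  have hP : Module.finrank ℂ (Pspace n) = 5 * Fintype.card (Perm (Fin n)) + 1 := by
    simp only [Pspace, Module.finrank_prod, Module.finrank_pi, Module.finrank_self]
    ring
  have hker : Module.finrank ℂ (LinearMap.ker (Phi n)) = 2 := by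
    rw [ker_Phi hn]
    have hinj : Function.Injective (psi n) := by
      intro v u hvu
      have h1 := congrFun (congrArg Prod.fst hvu) 1
      have h2 := congrFun (congrArg (fun p => p.2.1) hvu) 1
      exact Prod.ext h1 h2
    rw [LinearMap.finrank_range_of_inj hinj]
    simp [Module.finrank_prod]
  have := LinearMap.finrank_range_add_finrank_ker (Phi n)
  rw [range_Phi hn, hker, hP] at this
  have hcard : 2 ≤ Fintype.card (Perm (Fin n)) := by
    rw [Fintype.card_perm, Fintype.card_fin]
    calc 2 = Nat.factorial 2 := rfl
    _ ≤ Nat.factorial n := Nat.factorial_le hn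
  omega

end LinAlg
section MatrixPart
open Matrix Kronecker
variable (n : ℕ)

noncomputable def phiv (a s : Perm (Fin n)) : (Perm (Fin n) ⊕ Perm (Fin n)) → ℂ :=
  Sum.elim (fun g => if g = a then 1 else 0) (fun g => if g = a * s then 1 else 0)

noncomputable def Fmat (s : Perm (Fin n)) :
    Matrix (Perm (Fin n) ⊕ Perm (Fin n)) (Perm (Fin n) ⊕ Perm (Fin n)) ℂ :=
  Matrix.fromBlocks 1
    (Matrix.of fun h g : Perm (Fin n) => if g = h * s then (1 : ℂ) else 0)
    (Matrix.of fun h g : Perm (Fin n) => if g = h * s⁻¹ then (1 : ℂ) else 0) 1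

noncomputable def Vmat : Matrix ((Perm (Fin n) ⊕ Perm (Fin n)) × (Perm (Fin n) ⊕ Perm (Fin n)))
    (Perm (Fin n) × Perm (Fin n) × Perm (Fin n)) ℂ :=
  Matrix.of fun r c => phiv n c.1 c.2.2 r.1 * phiv n c.2.1 c.2.2 r.2

variable {n}

lemma phiv_conj (a s : Perm (Fin n)) (p : Perm (Fin n) ⊕ Perm (Fin n)) :
    (starRingEnd ℂ) (phiv n a s p) = phiv n a s p := by
  rcases p with g | g <;> simp [phiv, apply_ite (starRingEnd ℂ)]

lemma sumA (s : Perm (Fin n)) (p p' : Perm (Fin n) ⊕ Perm (Fin n)) :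
    ∑ a : Perm (Fin n), phiv n a s p * phiv n a s p' = Fmat n s p p' := by
  rcases p with g | g <;> rcases p' with g' | g'
  · simp only [phiv, Sum.elim_inl, Fmat, Matrix.fromBlocks_apply₁₁, Matrix.one_apply, ite_mul,
      one_mul, zero_mul]
    rw [Finset.sum_ite_eq Finset.univ g (fun a => if g' = a then (1:ℂ) else 0)]
    simp [eq_comm]
  · simp only [phiv, Sum.elim_inl, Sum.elim_inr, Fmat, Matrix.fromBlocks_apply₁₂, Matrix.of_apply,
      ite_mul, one_mul, zero_mul]
    rw [Finset.sum_ite_eq Finset.univ g (fun a => if g' = a * s then (1:ℂ) else 0)]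
    simp
  · simp only [phiv, Sum.elim_inl, Sum.elim_inr, Fmat, Matrix.fromBlocks_apply₂₁, Matrix.of_apply,
      ite_mul, one_mul, zero_mul]
    have hcond : ∀ a : Perm (Fin n), (g = a * s) ↔ (a = g * s⁻¹) := by
      intro a
      constructor
      · intro h; rw [h]; group
      · intro h; rw [h]; group
    simp only [hcond]
    rw [Finset.sum_ite_eq' Finset.univ (g * s⁻¹) (fun a => if g' = a then (1:ℂ) else 0)]
    simp
  · simp only [phiv, Sum.elim_inr, Fmat, Matrix.fromBlocks_apply₂₂, Matrix.one_apply]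
    have hcond : ∀ a : Perm (Fin n), (g = a * s) ↔ (a = g * s⁻¹) := by
      intro a
      constructor
      · intro h; rw [h]; group
      · intro h; rw [h]; group
    simp only [hcond, ite_mul, one_mul, zero_mul]
    rw [Finset.sum_ite_eq' Finset.univ (g * s⁻¹) (fun a => if g' = a * s then (1:ℂ) else 0)]
    have : (g' = g * s⁻¹ * s) ↔ (g' = g) := by
      have e : g * s⁻¹ * s = g := by group
      rw [e]
    simp [this, eq_comm]

end MatrixPart
section MatrixPart2
open Matrix Kronecker
open scoped ComplexOrder
variable {n : ℕ}

lemma Vmul_entry (r r' : (Perm (Fin n) ⊕ Perm (Fin n)) × (Perm (Fin n) ⊕ Perm (Fin n))) :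
    (Vmat n * (Vmat n)ᴴ) r r' = ∑ s : Perm (Fin n), Fmat n s r.1 r'.1 * Fmat n s r.2 r'.2 := by
  rw [Matrix.mul_apply]
  have hterm : ∀ c : Perm (Fin n) × Perm (Fin n) × Perm (Fin n),
      Vmat n r c * (Vmat n)ᴴ c r'
        = (phiv n c.1 c.2.2 r.1 * phiv n c.1 c.2.2 r'.1)
          * (phiv n c.2.1 c.2.2 r.2 * phiv n c.2.1 c.2.2 r'.2) := by
    intro c
    rw [Matrix.conjTranspose_apply, Vmat, Matrix.of_apply, Matrix.of_apply, star_mul']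
    show _ * ((starRingEnd ℂ) _ * (starRingEnd ℂ) _) = _
    rw [phiv_conj, phiv_conj]
    ring
  rw [Finset.sum_congr rfl (fun c _ => hterm c)]
  rw [Fintype.sum_prod_type]
  have hswap : ∀ a : Perm (Fin n),
      (∑ bs : Perm (Fin n) × Perm (Fin n),
        (phiv n a bs.2 r.1 * phiv n a bs.2 r'.1) * (phiv n bs.1 bs.2 r.2 * phiv n bs.1 bs.2 r'.2))
      = ∑ s : Perm (Fin n), ∑ b : Perm (Fin n),
        (phiv n a s r.1 * phiv n a s r'.1) * (phiv n b s r.2 * phiv n b s r'.2) := by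
    intro a
    rw [Fintype.sum_prod_type]
    exact Finset.sum_comm
  rw [Finset.sum_congr rfl (fun a _ => hswap a), Finset.sum_comm]
  refine Finset.sum_congr rfl fun s _ => ?_
  rw [← sumA s r.1 r'.1, ← sumA s r.2 r'.2, Finset.sum_mul_sum]

lemma collapse (a s : Perm (Fin n)) (f : (Perm (Fin n) ⊕ Perm (Fin n)) → ℂ) :
    ∑ p : Perm (Fin n) ⊕ Perm (Fin n), phiv n a s p * f p
      = f (Sum.inl a) + f (Sum.inr (a * s)) := by
  rw [Fintype.sum_sum_type]
  simp only [phiv, Sum.elim_inl, Sum.elim_inr, ite_mul, one_mul, zero_mul]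
  rw [Finset.sum_ite_eq' Finset.univ a (fun g => f (Sum.inl g)),
    Finset.sum_ite_eq' Finset.univ (a * s) (fun g => f (Sum.inr g))]
  simp

lemma mulVec_VH (v : ((Perm (Fin n) ⊕ Perm (Fin n)) × (Perm (Fin n) ⊕ Perm (Fin n))) → ℂ)
    (c : Perm (Fin n) × Perm (Fin n) × Perm (Fin n)) :
    ((Vmat n)ᴴ *ᵥ v) c
      = v (Sum.inl c.1, Sum.inl c.2.1) + v (Sum.inl c.1, Sum.inr (c.2.1 * c.2.2))
        + v (Sum.inr (c.1 * c.2.2), Sum.inl c.2.1)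
        + v (Sum.inr (c.1 * c.2.2), Sum.inr (c.2.1 * c.2.2)) := by
  obtain ⟨a, b, s⟩ := c
  rw [Matrix.mulVec]
  show ∑ r : (Perm (Fin n) ⊕ Perm (Fin n)) × (Perm (Fin n) ⊕ Perm (Fin n)),
    (Vmat n)ᴴ (a, b, s) r * v r = _
  have hterm : ∀ r, (Vmat n)ᴴ (a, b, s) r * v r
      = phiv n a s r.1 * (phiv n b s r.2 * v r) := by
    intro r
    rw [Matrix.conjTranspose_apply, Vmat, Matrix.of_apply, star_mul']
    show ((starRingEnd ℂ) _ * (starRingEnd ℂ) _) * v r = _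
    rw [phiv_conj, phiv_conj]
    ring
  rw [Finset.sum_congr rfl (fun r _ => hterm r), Fintype.sum_prod_type]
  have hinner : ∀ p, ∑ q : Perm (Fin n) ⊕ Perm (Fin n),
      phiv n a s p * (phiv n b s q * v (p, q))
        = phiv n a s p * (v (p, Sum.inl b) + v (p, Sum.inr (b * s))) := by
    intro p
    rw [← Finset.mul_sum, collapse b s (fun q => v (p, q))]
  rw [Finset.sum_congr rfl (fun p _ => hinner p),
    collapse a s (fun p => v (p, Sum.inl b) + v (p, Sum.inr (b * s)))]
  ring

lemma ker_VH : LinearMap.ker ((Vmat n)ᴴ.mulVecLin) = Kspace n := by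
  ext v
  constructor
  · intro hv a b s
    have h := congrFun (LinearMap.mem_ker.mp hv) (a, b, s)
    rw [Matrix.mulVecLin_apply] at h
    rw [mulVec_VH v (a, b, s)] at h
    exact h
  · intro hv
    rw [LinearMap.mem_ker]
    funext c
    rw [Matrix.mulVecLin_apply, mulVec_VH v c]
    exact hv c.1 c.2.1 c.2.2

lemma rank_Vmat (hn : 2 ≤ n) :
    (Vmat n).rank + (5 * Fintype.card (Perm (Fin n)) - 1)
      = 4 * Fintype.card (Perm (Fin n)) ^ 2 := by
  have h1 : ((Vmat n)ᴴ).rank = (Vmat n).rank := Matrix.rank_conjTranspose _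
  have h2 := LinearMap.finrank_range_add_finrank_ker ((Vmat n)ᴴ.mulVecLin)
  rw [ker_VH, finrank_Kspace hn] at h2
  have h3 : Module.finrank ℂ
      ((((Perm (Fin n) ⊕ Perm (Fin n)) × (Perm (Fin n) ⊕ Perm (Fin n)))) → ℂ)
      = 4 * Fintype.card (Perm (Fin n)) ^ 2 := by
    rw [Module.finrank_pi, Fintype.card_prod, Fintype.card_sum]
    ring
  rw [h3] at h2
  rw [← h1]
  exact h2

end MatrixPart2
section Final
open Matrix Kronecker Nat
open scoped ComplexOrder
variable {n : ℕ}

lemma Mdecomp (n : ℕ) :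
    (((n ! : ℂ))⁻¹ • ∑ s : Perm (Fin n),
        ((2 * (n ! : ℂ))⁻¹ • Fmat n s) ⊗ₖ ((2 * (n ! : ℂ))⁻¹ • Fmat n s))
      = ((4 : ℂ) * (n ! : ℂ) ^ 3)⁻¹ • (Vmat n * (Vmat n)ᴴ) := by
  have hfac : (n ! : ℂ) ≠ 0 := Nat.cast_ne_zero.mpr (Nat.factorial_ne_zero n)
  have hcard : (Fintype.card (Perm (Fin n)) : ℂ) = (n ! : ℂ) := by
    rw [Fintype.card_perm, Fintype.card_fin]
  ext r r'
  rw [Matrix.smul_apply, Matrix.smul_apply, Vmul_entry r r', Matrix.sum_apply]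
  have hterm : ∀ s : Perm (Fin n),
      (((2 * (n ! : ℂ))⁻¹ • Fmat n s) ⊗ₖ ((2 * (n ! : ℂ))⁻¹ • Fmat n s)) r r'
        = (2 * (n ! : ℂ))⁻¹ * (2 * (n ! : ℂ))⁻¹
          * (Fmat n s r.1 r'.1 * Fmat n s r.2 r'.2) := by
    intro s
    rw [Matrix.kroneckerMap_apply, Matrix.smul_apply, Matrix.smul_apply, smul_eq_mul,
      smul_eq_mul]
    ring
  rw [Finset.sum_congr rfl (fun s _ => hterm s), ← Finset.mul_sum, smul_eq_mul, smul_eq_mul]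
  rw [← mul_assoc]
  congr 1
  field_simp
  ring

theorem main_rank (hn : 2 ≤ n) :
    ((((n ! : ℂ))⁻¹ • ∑ s : Perm (Fin n),
        ((2 * (n ! : ℂ))⁻¹ • Fmat n s) ⊗ₖ ((2 * (n ! : ℂ))⁻¹ • Fmat n s)).rank : ℤ)
      = 4 * (n ! : ℤ) ^ 2 - 5 * (n ! : ℤ) + 1 := by
  have hfac : (n ! : ℂ) ≠ 0 := Nat.cast_ne_zero.mpr (Nat.factorial_ne_zero n)
  have hc : ((4 : ℂ) * (n ! : ℂ) ^ 3)⁻¹ ≠ 0 :=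
    inv_ne_zero (mul_ne_zero (by norm_num) (pow_ne_zero _ hfac))
  have hrank : (((n ! : ℂ))⁻¹ • ∑ s : Perm (Fin n),
        ((2 * (n ! : ℂ))⁻¹ • Fmat n s) ⊗ₖ ((2 * (n ! : ℂ))⁻¹ • Fmat n s)).rank
      = (Vmat n).rank := by
    rw [Mdecomp n]
    rw [show ((4 : ℂ) * (n ! : ℂ) ^ 3)⁻¹ • (Vmat n * (Vmat n)ᴴ)
        = (((4 : ℂ) * (n ! : ℂ) ^ 3)⁻¹
          • (1 : Matrix ((Perm (Fin n) ⊕ Perm (Fin n)) × (Perm (Fin n) ⊕ Perm (Fin n)))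
              ((Perm (Fin n) ⊕ Perm (Fin n)) × (Perm (Fin n) ⊕ Perm (Fin n))) ℂ))
          * (Vmat n * (Vmat n)ᴴ) from by rw [Matrix.smul_mul, one_mul]]
    rw [Matrix.rank_mul_eq_right_of_isUnit_det _ _ ?hdet]
    · exact Matrix.rank_self_mul_conjTranspose _
    case hdet =>
      rw [Matrix.det_smul, Matrix.det_one, mul_one]
      exact isUnit_iff_ne_zero.mpr (pow_ne_zero _ hc)
  rw [hrank]
  have h2 := rank_Vmat hn
  have hN : Fintype.card (Perm (Fin n)) = n ! := by
    rw [Fintype.card_perm, Fintype.card_fin]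
  rw [hN] at h2
  have hge : 2 ≤ n ! := by
    calc 2 = Nat.factorial 2 := rfl
    _ ≤ n ! := Nat.factorial_le hn
  have h1le : 1 ≤ 5 * n ! := by omega
  zify [h1le] at h2
  push_cast
  linarith

end Final

open Kronecker Nat in
/-- For the symmetric group `S_n` with `n ≥ 2`, the rank of the k = 2 averaged hidden
shift state `γ₁^{(2)} = (1/n!) ∑_s γ₁(s)^{⊗2}` equals `4(n!)² − 5·n! + 1`. -/
theorem rank_averaged_hidden_shift_state_two_symmetric_group (n : ℕ) (hn : 2 ≤ n) :
    ((((n ! : ℂ))⁻¹ • ∑ s : Equiv.Perm (Fin n),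
        ((2 * (n ! : ℂ))⁻¹ •
          Matrix.fromBlocks 1
            (Matrix.of fun h g : Equiv.Perm (Fin n) => if g = h * s then (1 : ℂ) else 0)
            (Matrix.of fun h g : Equiv.Perm (Fin n) => if g = h * s⁻¹ then (1 : ℂ) else 0) 1) ⊗ₖ
        ((2 * (n ! : ℂ))⁻¹ •
          Matrix.fromBlocks 1
            (Matrix.of fun h g : Equiv.Perm (Fin n) => if g = h * s then (1 : ℂ) else 0)
            (Matrix.of fun h g : Equiv.Perm (Fin n) => if g = h * s⁻¹ then (1 : ℂ) else 0) 1)).rank : ℤ)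
      = 4 * (n ! : ℤ) ^ 2 - 5 * (n ! : ℤ) + 1 := main_rank hn
end
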